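/- Fix an even positive integer k. For every finite simple graph H there exists a finite chordal graph G such that G^k contains an induced subgraph isomorphic to H. -/

import Mathlib

open SimpleGraph

variable {V : Type*}

/-- The `k`-th power of a graph: distinct vertices are adjacent iff their distance is at most `k`. -/
def SimpleGraph.power (G : SimpleGraph V) (k : ℕ) : SimpleGraph V where
  Adj u v := u ≠ v ∧ G.Reachable u v ∧ G.dist u v ≤ k
  symm := by
    refine ⟨?_⟩
    rintro u v ⟨h1, h2, h3⟩
    exact ⟨h1.symm, h2.symm, by rwa [SimpleGraph.dist_comm]⟩
  loopless := ⟨fun u h => h.1 rfl⟩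

/-- A set of vertices is independent if it is pairwise non-adjacent. -/
def SimpleGraph.IsIndepSetOn (G : SimpleGraph V) (s : Set V) : Prop :=
  s.Pairwise fun u v => ¬ G.Adj u v

/-- The independence number of the subgraph of `G` induced by `X`. -/
noncomputable def indepNumOn (G : SimpleGraph V) (X : Set V) : ℕ :=
  sSup {n | ∃ S : Finset V, ↑S ⊆ X ∧ G.IsIndepSetOn ↑S ∧ S.card = n}

/-- `(T, X)` is a tree decomposition of `G`. -/
structure IsTreeDecompOn {ι : Type*} (G : SimpleGraph V) (T : SimpleGraph ι) (X : ι → Set V) :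
    Prop where
  isTree : T.IsTree
  exists_bag : ∀ v : V, ∃ t, v ∈ X t
  exists_bag_edge : ∀ ⦃u v : V⦄, G.Adj u v → ∃ t, u ∈ X t ∧ v ∈ X t
  subtree_connected : ∀ v : V, (T.induce {t | v ∈ X t}).Connected

/-- The independence number of a tree decomposition with bags `X`. -/
noncomputable def decompIndepNum {ι : Type*} (G : SimpleGraph V) (X : ι → Set V) : ℕ :=
  ⨆ t, indepNumOn G (X t)

/-- The tree-independence number: the minimum independence number over all tree decompositions. -/
noncomputable def treeIndepNum (G : SimpleGraph V) : ℕ :=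
  sInf {n | ∃ (ι : Type) (T : SimpleGraph ι) (X : ι → Set V),
    Finite ι ∧ IsTreeDecompOn G T X ∧ decompIndepNum G X = n}

/-- The graph `G(ℋ)` on the index set of a family of (vertex sets of) subgraphs of `G`:
two distinct indices are adjacent iff the subgraphs share a vertex or are joined by an edge. -/
def packingGraph {J : Type*} (G : SimpleGraph V) (S : J → Set V) : SimpleGraph J where
  Adj i j := i ≠ j ∧ ((S i ∩ S j).Nonempty ∨ ∃ u ∈ S i, ∃ v ∈ S j, G.Adj u v)
  symm := by
    refine ⟨?_⟩
    rintro i j ⟨hne, h⟩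
    refine ⟨hne.symm, ?_⟩
    rcases h with ⟨x, hx⟩ | ⟨u, hu, v, hv, huv⟩
    · exact Or.inl ⟨x, hx.2, hx.1⟩
    · exact Or.inr ⟨v, hv, u, hu, huv.symm⟩
  loopless := ⟨fun i h => h.1 rfl⟩

/-- A graph is chordal if it has no induced cycle of length at least four. -/
def IsChordal (G : SimpleGraph V) : Prop :=
  ∀ n : ℕ, 4 ≤ n → ∀ s : Set V, IsEmpty (G.induce s ≃g cycleGraph n)

/-!
Let `G` be the graph made of a clique whose vertices are the edges of `H` and, for each vertex
`u` of `H`, a path `(u, 0), …, (u, m - 1)` whose top `(u, m - 1)` is joined to the clique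
vertices of the edges at `u`. If the clique vertices are put above all path vertices and path
vertices are ordered by their index, the neighbours of any vertex that lie above it form a
clique, so `G` is chordal. The feet `(u, 0)`, `(v, 0)` are joined by a walk of length `2m` (up,
through the edge vertex `uv`, down) when `uv` is an edge of `H`. Otherwise they are at distance
at least `2m + 1`, because the distance to `(v, 0)`, which has an explicit formula, changes by at
most one along an edge. Hence the feet induce a copy of `H` in `G ^ (2m)`.
-/

namespace SimpleGraph

variable {G : SimpleGraph V}

theorem Walk.le_length_add {f : V → ℕ} (hf : ∀ ⦃x y⦄, G.Adj x y → f x ≤ f y + 1) {u v : V}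
    (p : G.Walk u v) : f u ≤ p.length + f v := by
  induction p with
  | nil => simp
  | cons h _ ih =>
    rw [Walk.length_cons]
    have := hf h
    omega

theorem Reachable.le_dist_add {f : V → ℕ} (hf : ∀ ⦃x y⦄, G.Adj x y → f x ≤ f y + 1) {u v : V}
    (h : G.Reachable u v) : f u ≤ G.dist u v + f v := by
  obtain ⟨p, hp⟩ := h.exists_walk_length_eq_dist
  exact hp ▸ p.le_length_add hf

open scoped Fin.CommRing in
theorem cycleGraph_adj_add_one_sub_one {n : ℕ} (i : Fin (n + 4)) :
    (cycleGraph (n + 4)).Adj i (i + 1) ∧ (cycleGraph (n + 4)).Adj i (i - 1) ∧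
      i + 1 ≠ i - 1 ∧ ¬ (cycleGraph (n + 4)).Adj (i + 1) (i - 1) := by
  have two_mod : 2 % (n + 4) = 2 := Nat.mod_eq_of_lt (by omega)
  have two_ne_zero : (2 : Fin (n + 4)) ≠ 0 := by simp [Fin.ext_iff, two_mod]
  have two_ne_one : (2 : Fin (n + 4)) ≠ 1 := by simp [Fin.ext_iff, two_mod]
  have neg_two_ne_one : (-2 : Fin (n + 4)) ≠ 1 := by
    rw [Ne, neg_eq_iff_eq_neg]
    simp [Fin.ext_iff, Fin.val_neg, two_mod]
  rw [cycleGraph_adj, cycleGraph_adj, cycleGraph_adj, show i + 1 - i = 1 by ring,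
    show i - (i - 1) = 1 by ring, show i + 1 - (i - 1) = 2 by ring,
    show i - 1 - (i + 1) = -2 by ring]
  refine ⟨Or.inr rfl, Or.inl rfl, fun h => two_ne_zero ?_, by tauto⟩
  rw [← show i + 1 - (i - 1) = 2 by ring, h, sub_self]

theorem exists_adj_adj_not_adj_of_induce_iso_cycleGraph {s : Set V} {n : ℕ} (hn : 4 ≤ n)
    (φ : G.induce s ≃g cycleGraph n) {x : V} (hx : x ∈ s) :
    ∃ y ∈ s, ∃ z ∈ s, G.Adj x y ∧ G.Adj x z ∧ y ≠ z ∧ ¬ G.Adj y z := by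
  obtain ⟨n, rfl⟩ : ∃ k, n = k + 4 := ⟨n - 4, by omega⟩
  obtain ⟨hy, hz, hyz, hnyz⟩ := cycleGraph_adj_add_one_sub_one (φ ⟨x, hx⟩)
  refine ⟨_, (φ.symm (φ ⟨x, hx⟩ + 1)).2, _, (φ.symm (φ ⟨x, hx⟩ - 1)).2, ?_, ?_, ?_, ?_⟩
  · simpa using φ.symm.map_adj_iff.2 hy
  · simpa using φ.symm.map_adj_iff.2 hz
  · exact fun h => hyz (φ.symm.injective (Subtype.ext h))
  · exact fun h => hnyz (φ.symm.map_adj_iff.1 h)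

/-- The easy half of the characterisation of chordal graphs by perfect elimination orderings. -/
theorem isChordal_of_forall_adj_of_le {β : Type*} [LinearOrder β] (d : V → β)
    (hd : ∀ ⦃x y z⦄, G.Adj x y → G.Adj x z → d x ≤ d y → d x ≤ d z → y ≠ z → G.Adj y z) :
    IsChordal G := by
  refine fun n hn s => ⟨fun φ => ?_⟩
  have hfin : s.Finite := Set.finite_coe_iff.1 (Finite.of_equiv _ φ.toEquiv.symm)
  have hne : s.Nonempty := ⟨_, (φ.symm ⟨0, by omega⟩).2⟩
  obtain ⟨x, hx, hmin⟩ := s.exists_min_image d hfin hne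
  obtain ⟨y, hy, z, hz, hxy, hxz, hyz, hnyz⟩ :=
    exists_adj_adj_not_adj_of_induce_iso_cycleGraph hn φ hx
  exact hnyz (hd hxy hxz (hmin y hy) (hmin z hz) hyz)

variable {α : Type*} (H : SimpleGraph α) (m : ℕ)

def edgeCliquePaths : SimpleGraph ((α × Fin m) ⊕ H.edgeSet) where
  Adj
    | .inl (u, i), .inl (v, j) => u = v ∧ (pathGraph m).Adj i j
    | .inl (u, i), .inr e => i.val + 1 = m ∧ u ∈ (e : Sym2 α)
    | .inr e, .inl (u, i) => i.val + 1 = m ∧ u ∈ (e : Sym2 α)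
    | .inr e, .inr f => e ≠ f
  symm := ⟨by
    rintro (⟨u, i⟩ | e) (⟨v, j⟩ | f) h
    · exact ⟨h.1.symm, h.2.symm⟩
    all_goals first | exact h | exact Ne.symm h⟩
  loopless := ⟨by
    rintro (⟨u, i⟩ | e) h
    · exact (pathGraph m).loopless.irrefl i h.2
    · exact h rfl⟩

variable {H m}

@[simp]
theorem edgeCliquePaths_adj_inl_inl {u v : α} {i j : Fin m} :
    (edgeCliquePaths H m).Adj (.inl (u, i)) (.inl (v, j)) ↔ u = v ∧ (pathGraph m).Adj i j :=
  Iff.rfl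

@[simp]
theorem edgeCliquePaths_adj_inl_inr {u : α} {i : Fin m} {e : H.edgeSet} :
    (edgeCliquePaths H m).Adj (.inl (u, i)) (.inr e) ↔ i.val + 1 = m ∧ u ∈ (e : Sym2 α) :=
  Iff.rfl

@[simp]
theorem edgeCliquePaths_adj_inr_inl {u : α} {i : Fin m} {e : H.edgeSet} :
    (edgeCliquePaths H m).Adj (.inr e) (.inl (u, i)) ↔ i.val + 1 = m ∧ u ∈ (e : Sym2 α) :=
  Iff.rfl

@[simp]
theorem edgeCliquePaths_adj_inr_inr {e f : H.edgeSet} :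
    (edgeCliquePaths H m).Adj (.inr e) (.inr f) ↔ e ≠ f :=
  Iff.rfl

theorem isChordal_edgeCliquePaths : IsChordal (edgeCliquePaths H m) := by
  refine isChordal_of_forall_adj_of_le (Sum.elim (fun x => x.2.val) fun _ => m) ?_
  rintro (⟨u, i⟩ | e) (⟨v, j⟩ | f) (⟨w, l⟩ | g) hy hz hdy hdz hyz <;>
    simp only [edgeCliquePaths_adj_inl_inl, edgeCliquePaths_adj_inl_inr,
      edgeCliquePaths_adj_inr_inl, edgeCliquePaths_adj_inr_inr, pathGraph_adj, Sum.elim_inl,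
      Sum.elim_inr, ne_eq, Sum.inr.injEq] at hy hz hdy hdz hyz ⊢
  · obtain ⟨rfl, hij⟩ := hy
    obtain ⟨rfl, hil⟩ := hz
    exact absurd (Fin.ext (by omega) : j = l) (by simpa using hyz)
  all_goals first
    | exact hyz
    | omega

open Classical in
/-- The distance to the foot `(v, 0)` of the path at `v`, provided `v` is not isolated. -/
noncomputable def distToFoot (H : SimpleGraph α) (m : ℕ) (v : α) : (α × Fin m) ⊕ H.edgeSet → ℕ
  | .inl (w, i) => if w = v then i else if H.Adj w v then 2 * m - i else 2 * m + 1 - i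
  | .inr e => if v ∈ (e : Sym2 α) then m else m + 1

theorem distToFoot_le_add_one (v : α) ⦃x y : (α × Fin m) ⊕ H.edgeSet⦄
    (h : (edgeCliquePaths H m).Adj x y) : distToFoot H m v x ≤ distToFoot H m v y + 1 := by
  have top_edge {u : α} {i : Fin m} {e : H.edgeSet} (him : i.val + 1 = m)
      (hu : u ∈ (e : Sym2 α)) :
      distToFoot H m v (.inl (u, i)) ≤ distToFoot H m v (.inr e) + 1 ∧
        distToFoot H m v (.inr e) ≤ distToFoot H m v (.inl (u, i)) + 1 := by
    by_cases huv : u = v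
    · subst huv
      simp only [distToFoot, ↓reduceIte, if_pos hu]
      omega
    by_cases hv : v ∈ (e : Sym2 α)
    · have hadj : H.Adj u v := by
        rw [← mem_edgeSet, ← (Sym2.mem_and_mem_iff huv).1 ⟨hu, hv⟩]
        exact e.2
      simp only [distToFoot, if_neg huv, if_pos hadj, if_pos hv]
      omega
    · simp only [distToFoot, if_neg huv, if_neg hv]
      split_ifs <;> omega
  rcases x with ⟨u, i⟩ | e <;> rcases y with ⟨w, j⟩ | f <;>
    simp only [edgeCliquePaths_adj_inl_inl, edgeCliquePaths_adj_inl_inr,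
      edgeCliquePaths_adj_inr_inl, edgeCliquePaths_adj_inr_inr, pathGraph_adj] at h
  · obtain ⟨rfl, hij⟩ := h
    simp only [distToFoot]
    split_ifs <;> omega
  · exact (top_edge h.1 h.2).1
  · exact (top_edge h.1 h.2).2
  · simp only [distToFoot]
    split_ifs <;> omega

theorem exists_walk_from_foot (u : α) (i : ℕ) (hi : i < m) :
    ∃ p : (edgeCliquePaths H m).Walk (.inl (u, ⟨0, by omega⟩)) (.inl (u, ⟨i, hi⟩)),
      p.length = i := by
  induction i with
  | zero => exact ⟨.nil, rfl⟩
  | succ i ih =>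
    obtain ⟨p, hp⟩ := ih (by omega)
    have hadj : (edgeCliquePaths H m).Adj (.inl (u, ⟨i, by omega⟩)) (.inl (u, ⟨i + 1, hi⟩)) := by
      simp [pathGraph_adj]
    exact ⟨p.concat hadj, by rw [Walk.length_concat, hp]⟩

theorem edgeCliquePaths_power_adj_foot (hm : 0 < m) {u v : α} :
    ((edgeCliquePaths H m).power (2 * m)).Adj (.inl (u, ⟨0, hm⟩)) (.inl (v, ⟨0, hm⟩)) ↔
      H.Adj u v := by
  constructor
  · rintro ⟨hne, hreach, hdist⟩
    by_contra huv
    have hne' : u ≠ v := fun h => hne (by rw [h])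
    have := hreach.le_dist_add (distToFoot_le_add_one v)
    simp only [distToFoot, if_neg hne', if_neg huv, ↓reduceIte] at this
    omega
  · intro huv
    have htop : m - 1 < m := by omega
    obtain ⟨p, hp⟩ := exists_walk_from_foot (H := H) u (m - 1) htop
    obtain ⟨q, hq⟩ := exists_walk_from_foot (H := H) v (m - 1) htop
    have hu : (edgeCliquePaths H m).Adj (.inl (u, ⟨m - 1, htop⟩)) (.inr ⟨s(u, v), huv⟩) := by
      simp only [edgeCliquePaths_adj_inl_inr, Sym2.mem_mk_left, and_true]
      omega
    have hv : (edgeCliquePaths H m).Adj (.inr ⟨s(u, v), huv⟩) (.inl (v, ⟨m - 1, htop⟩)) := by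
      simp only [edgeCliquePaths_adj_inr_inl, Sym2.mem_mk_right, and_true]
      omega
    let r := ((p.concat hu).concat hv).append q.reverse
    have hr : r.length = 2 * m := by
      simp only [r, Walk.length_append, Walk.length_concat, Walk.length_reverse, hp, hq]
      omega
    exact ⟨fun h => huv.ne (by simpa using h), ⟨r⟩, hr ▸ dist_le r⟩

def footEmbedding (hm : 0 < m) : H ↪g (edgeCliquePaths H m).power (2 * m) where
  toFun u := .inl (u, ⟨0, hm⟩)
  inj' _ _ h := by simpa using h
  map_rel_iff' := edgeCliquePaths_power_adj_foot hm

end SimpleGraph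

theorem stmt_5 (k : ℕ) (hk : 0 < k) (hke : Even k)
    {W : Type*} [Fintype W] (H : SimpleGraph W) :
    ∃ (V : Type) (_ : Fintype V) (G : SimpleGraph V),
      IsChordal G ∧ ∃ s : Set V, Nonempty ((G.power k).induce s ≃g H) := by
  obtain ⟨m, rfl⟩ := hke
  have hm : 0 < m := by omega
  let e := Fintype.equivFin W
  let f := footEmbedding (H := H.map e) hm
  refine ⟨_, Fintype.ofFinite _, edgeCliquePaths (H.map e) m, isChordal_edgeCliquePaths,
    Set.range f, ⟨?_⟩⟩
  rw [← two_mul]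
  exact ((Iso.map e H).trans f.isoInduceRange).symm
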